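/- arXiv:2306.07010 — 7 statements merged into one kernel-verified Lean document; each statement's English description precedes it below -/
import Mathlib

section
/- For all integers n ≥ 2, the identity ∑_{i=1}^{n-1} C(n,i) · |(1/2)_i| · |(1/2)_{n-i}| = 2 · |(1/2)_n| holds, where (q)_k denotes the falling factorial q(q-1)···(q-k+1) with (q)_0 = 1. -/
/-!
Since `(1/2)_(n+1) = (1/2)_n (1/2 - n)`, induction gives `|(1/2)_(n+1)| = (n+1)! Cₙ / 2^(2n+1)` with
`Cₙ` the `n`-th Catalan number. After this substitution the binomial coefficients cancel against
the factorials, and the identity for `n = m + 2` becomes Segner's recurrence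
`C_(m+1) = ∑_(i+j=m) Cᵢ Cⱼ`.
-/

/-- The absolute value of the falling factorial `(1/2)_n = (1/2)(1/2-1)⋯(1/2-n+1)`. -/
noncomputable def ff (n : ℕ) : ℝ := |(descPochhammer ℝ n).eval (1/2 : ℝ)|

open Finset Nat

lemma ff_succ (n : ℕ) : ff (n + 1) = ff n * |1 / 2 - (n : ℝ)| := by
  rw [ff, descPochhammer_succ_eval, abs_mul, ← ff]

lemma ff_succ_eq_centralBinom (n : ℕ) :
    ff (n + 1) = n ! * n.centralBinom / 2 ^ (2 * n + 1) := by
  induction n with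
  | zero => simp [ff]
  | succ n ih =>
    have hcb : ((n : ℝ) + 1) * (n + 1).centralBinom = 2 * (2 * n + 1) * n.centralBinom := by
      exact_mod_cast succ_mul_centralBinom_succ n
    rw [ff_succ, ih, abs_of_nonpos (by push_cast; linarith), factorial_succ]
    push_cast
    field_simp
    linear_combination (-2 ^ (2 * n + 2) : ℝ) * hcb

lemma ff_succ_eq_catalan (n : ℕ) :
    ff (n + 1) = (n + 1)! * catalan n / 2 ^ (2 * n + 1) := by
  rw [ff_succ_eq_centralBinom, ← succ_mul_catalan_eq_centralBinom, factorial_succ]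
  push_cast
  ring

lemma choose_mul_ff_mul_ff {i j m : ℕ} (h : i + j = m) :
    ((m + 2).choose (i + 1) : ℝ) * ff (i + 1) * ff (j + 1)
      = (m + 2)! / 2 ^ (2 * m + 2) * (catalan i * catalan j) := by
  subst h
  have hchoose : ((i + j + 2).choose (i + 1) : ℝ) * (i + 1)! * (j + 1)! = (i + j + 2)! := by
    have hfac := add_choose_mul_factorial_mul_factorial (j + 1) (i + 1)
    rw [show j + 1 + (i + 1) = i + j + 2 by ring] at hfac
    rw [← hfac]
    push_cast
    ring
  rw [ff_succ_eq_catalan, ff_succ_eq_catalan, ← hchoose]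
  field_simp
  ring

lemma sum_Ico_one_eq_sum_antidiagonal {M : Type*} [AddCommMonoid M] (f : ℕ → ℕ → M) (m : ℕ) :
    ∑ i ∈ Ico 1 (m + 2), f i (m + 2 - i) = ∑ p ∈ antidiagonal m, f (p.1 + 1) (p.2 + 1) := by
  rw [sum_Ico_eq_sum_range, Nat.sum_antidiagonal_eq_sum_range_succ (fun i j => f (i + 1) (j + 1))]
  refine sum_congr rfl fun k hk => ?_
  have hkm : k ≤ m := by simp only [mem_range] at hk; omega
  rw [show m + 2 - (1 + k) = m - k + 1 by omega, add_comm 1 k]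

theorem stmt0 (n : ℕ) (hn : 2 ≤ n) :
    ∑ i ∈ Finset.Ico 1 n, (n.choose i : ℝ) * ff i * ff (n - i) = 2 * ff n := by
  obtain ⟨m, rfl⟩ := Nat.exists_eq_add_of_le' hn
  have hsegner : (catalan (m + 1) : ℝ) = ∑ p ∈ antidiagonal m, (catalan p.1 : ℝ) * catalan p.2 := by
    exact_mod_cast catalan_succ' m
  rw [sum_Ico_one_eq_sum_antidiagonal (fun i j => ((m + 2).choose i : ℝ) * ff i * ff j),
    sum_congr rfl fun p hp => choose_mul_ff_mul_ff (mem_antidiagonal.mp hp), ← mul_sum, ← hsegner,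
    ff_succ_eq_catalan]
  field_simp
  ring
end

section
/- For all integers n ≥ 2, ∑_{i=1}^{n} C(n,i) · |(1/2)_i| · |(1/2)_{n-i}| = 3 · |(1/2)_n|. -/
lemma smeval_desc (k : ℕ) (x : ℝ) :
    (descPochhammer ℤ k).smeval x = (descPochhammer ℝ k).eval x := by
  induction k with
  | zero => simp [descPochhammer_zero]
  | succ k ih =>
    rw [descPochhammer_succ_right, descPochhammer_succ_right, Polynomial.smeval_mul,
      Polynomial.eval_mul, ih, Polynomial.smeval_sub, Polynomial.smeval_X,
      Polynomial.smeval_natCast]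
    simp

lemma sign_desc : ∀ n : ℕ, 1 ≤ n → 0 < (-1 : ℝ)^(n-1) * (descPochhammer ℝ n).eval (1/2 : ℝ)
  | 1, _ => by norm_num [descPochhammer_one]
  | (n+2), _ => by
    have ih := sign_desc (n+1) (by omega)
    rw [descPochhammer_succ_eval]
    simp only [Nat.add_sub_cancel] at ih ⊢
    push_cast
    rw [pow_succ]
    have hpos : (0:ℝ) < (n:ℝ) + 1 - 1/2 := by
      have : (0:ℝ) ≤ (n:ℝ) := n.cast_nonneg
      linarith
    nlinarith [mul_pos ih hpos]

lemma eval_desc_eq (n : ℕ) (hn : 1 ≤ n) :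
    (descPochhammer ℝ n).eval (1/2 : ℝ) = (-1:ℝ)^(n-1) * ff n := by
  have h := sign_desc n hn
  have habs : ff n = |(-1:ℝ)^(n-1) * (descPochhammer ℝ n).eval (1/2:ℝ)| := by
    rw [ff, abs_mul, abs_pow, abs_neg, abs_one, one_pow, one_mul]
  rw [habs, abs_of_pos h]
  rcases Nat.even_or_odd (n-1) with he | ho
  · simp [he.neg_one_pow]
  · simp [ho.neg_one_pow]

lemma ff_pos (n : ℕ) (hn : 1 ≤ n) : 0 < ff n := by
  have h := sign_desc n hn
  rw [eval_desc_eq n hn] at h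
  rcases Nat.even_or_odd (n-1) with he | ho
  · simpa [he.neg_one_pow] using h
  · simpa [ho.neg_one_pow] using h

lemma eval_one_desc : ∀ n : ℕ, 2 ≤ n → (descPochhammer ℝ n).eval (1 : ℝ) = 0
  | 2, _ => by norm_num [descPochhammer_succ_eval, descPochhammer_one]
  | (n+3), _ => by
    rw [descPochhammer_succ_eval, eval_one_desc (n+2) (by omega), zero_mul]

noncomputable def Eh (k : ℕ) : ℝ := (descPochhammer ℝ k).eval (1/2 : ℝ)

lemma Eh_def (k : ℕ) : Eh k = (descPochhammer ℝ k).eval (1/2 : ℝ) := rfl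

theorem stmt1 (n : ℕ) (hn : 2 ≤ n) :
    ∑ i ∈ Finset.Icc 1 n, (n.choose i : ℝ) * ff i * ff (n - i) = 3 * ff n := by
  have h0 : Eh 0 = 1 := by simp [Eh_def, descPochhammer_zero]
  have hvdm := Ring.descPochhammer_smeval_add (R := ℝ) n (Commute.all (1/2 : ℝ) (1/2))
  have hone : (1/2 : ℝ) + 1/2 = 1 := by norm_num
  rw [hone, smeval_desc, eval_one_desc n hn] at hvdm
  have hvdm2 : (0:ℝ) = ∑ i ∈ Finset.range (n+1),
      (n.choose i : ℝ) * (Eh i * Eh (n - i)) := by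
    rw [hvdm, Finset.Nat.sum_antidiagonal_eq_sum_range_succ_mk]
    refine Finset.sum_congr rfl fun i hi => ?_
    rw [smeval_desc, smeval_desc, Eh_def, Eh_def]
  have hins : Finset.range (n+1) = insert 0 (insert n (Finset.Icc 1 (n-1))) := by
    ext x
    simp only [Finset.mem_range, Finset.mem_insert, Finset.mem_Icc]
    omega
  rw [hins, Finset.sum_insert (by simp only [Finset.mem_insert, Finset.mem_Icc]; omega),
    Finset.sum_insert (by simp only [Finset.mem_Icc]; omega)] at hvdm2
  have hEn : Eh n = (-1:ℝ)^(n-1) * ff n := by rw [Eh_def]; exact eval_desc_eq n (by omega)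
  have hc0 : (n.choose 0 : ℝ) * (Eh 0 * Eh (n - 0)) = Eh n := by simp [h0]
  have hcn : (n.choose n : ℝ) * (Eh n * Eh (n - n)) = Eh n := by simp [h0]
  rw [hc0, hcn] at hvdm2
  have hmid : ∑ i ∈ Finset.Icc 1 (n-1), (n.choose i : ℝ) * (Eh i * Eh (n - i)) =
      (-1:ℝ)^n * ∑ i ∈ Finset.Icc 1 (n-1), (n.choose i : ℝ) * ff i * ff (n - i) := by
    rw [Finset.mul_sum]
    refine Finset.sum_congr rfl fun i hi => ?_
    simp only [Finset.mem_Icc] at hi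
    rw [Eh_def, Eh_def, eval_desc_eq i (by omega), eval_desc_eq (n-i) (by omega)]
    have hpow : (-1:ℝ)^(i-1) * (-1:ℝ)^(n-i-1) = (-1:ℝ)^n := by
      rw [← pow_add, show (i-1)+(n-i-1) = n-2 by omega]
      conv_rhs => rw [show n = (n-2)+2 by omega]
      rw [pow_add]
      norm_num
    calc (n.choose i : ℝ) * ((-1:ℝ)^(i-1) * ff i * ((-1:ℝ)^(n-i-1) * ff (n-i)))
        = ((-1:ℝ)^(i-1) * (-1:ℝ)^(n-i-1)) * ((n.choose i : ℝ) * ff i * ff (n-i)) := by ring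
      _ = (-1:ℝ)^n * ((n.choose i : ℝ) * ff i * ff (n-i)) := by rw [hpow]
  rw [hmid, hEn] at hvdm2
  have hsq : ((-1:ℝ)^n) * ((-1:ℝ)^n) = 1 := by
    rw [← pow_add]
    exact Even.neg_one_pow ⟨n, by ring⟩
  have hmid2 : ∑ i ∈ Finset.Icc 1 (n-1), (n.choose i : ℝ) * ff i * ff (n - i) = 2 * ff n := by
    have hpm : (-1:ℝ)^(n-1) = -((-1:ℝ)^n) := by
      conv_rhs => rw [show n = (n-1)+1 by omega]
      rw [pow_succ]
      ring
    rw [hpm] at hvdm2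
    have h2 : (-1:ℝ)^n * ∑ i ∈ Finset.Icc 1 (n-1), (n.choose i : ℝ) * ff i * ff (n - i)
        = 2 * ((-1:ℝ)^n * ff n) := by linarith
    have h3 := congrArg (fun x => (-1:ℝ)^n * x) h2
    rw [← mul_assoc, hsq, one_mul] at h3
    rw [h3, show (-1:ℝ)^n * (2 * ((-1:ℝ)^n * ff n)) = ((-1:ℝ)^n * (-1:ℝ)^n) * (2 * ff n) by ring,
      hsq, one_mul]
  have hsplit : Finset.Icc 1 n = insert n (Finset.Icc 1 (n-1)) := by
    ext x
    simp only [Finset.mem_insert, Finset.mem_Icc]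
    omega
  rw [hsplit, Finset.sum_insert (by simp only [Finset.mem_Icc]; omega), hmid2]
  have hffn : ff (n - n) = 1 := by simp [ff, descPochhammer_zero]
  rw [Nat.choose_self, hffn]
  push_cast
  ring
end

section
/- For all integers n ≥ 2, ∑_{i=0}^{n} C(n,i) · |(1/2)_i| · |(1/2)_{n-i}| = 4 · |(1/2)_n|. -/
open Polynomial Finset

theorem descPochhammer_smeval_int_eq_eval {R : Type*} [CommRing R] (r : R) (k : ℕ) :
    (descPochhammer ℤ k).smeval r = (descPochhammer R k).eval r := by
  rw [← aeval_eq_smeval, ← eval_map_algebraMap, descPochhammer_map]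

theorem descPochhammer_eval_add {R : Type*} [CommRing R] (r s : R) (k : ℕ) :
    (descPochhammer R k).eval (r + s) = ∑ ij ∈ antidiagonal k,
      k.choose ij.1 * ((descPochhammer R ij.1).eval r * (descPochhammer R ij.2).eval s) := by
  simpa only [descPochhammer_smeval_int_eq_eval] using
    Ring.descPochhammer_smeval_add k (Commute.all r s)

theorem ascPochhammer_eval_add {R : Type*} [CommRing R] (r s : R) (k : ℕ) :
    (ascPochhammer R k).eval (r + s) = ∑ ij ∈ antidiagonal k,
      k.choose ij.1 * ((ascPochhammer R ij.1).eval r * (ascPochhammer R ij.2).eval s) := by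
  rw [← neg_neg (r + s), neg_add, ascPochhammer_eval_neg_eq_descPochhammer, descPochhammer_eval_add,
    mul_sum]
  refine sum_congr rfl fun ij hij => ?_
  rw [← mem_antidiagonal.mp hij, ← neg_neg r, ← neg_neg s, ascPochhammer_eval_neg_eq_descPochhammer,
    ascPochhammer_eval_neg_eq_descPochhammer, neg_neg, neg_neg, pow_add]
  ring

theorem ff_eq_abs_ascPochhammer_eval (n : ℕ) :
    ff n = |(ascPochhammer ℝ n).eval (-1/2)| := by
  rw [ff, neg_div, ascPochhammer_eval_neg_eq_descPochhammer, abs_mul, abs_neg_one_pow, one_mul]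

theorem ascPochhammer_eval_neg_half_succ (k : ℕ) :
    (ascPochhammer ℝ (k + 1)).eval (-1/2) = -ff (k + 1) := by
  have hneg : (ascPochhammer ℝ (k + 1)).eval (-1/2) < 0 := by
    rw [ascPochhammer_succ_left, eval_mul, eval_comp]
    simp only [eval_X, eval_add, eval_one]
    exact mul_neg_of_neg_of_pos (by norm_num) (ascPochhammer_pos k _ (by norm_num))
  rw [ff_eq_abs_ascPochhammer_eval, abs_of_neg hneg, neg_neg]

theorem sum_range_choose_mul_mul_eq {R : Type*} [CommSemiring R] (f : ℕ → R) (n : ℕ) :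
    ∑ i ∈ range (n + 2), ((n + 1).choose i : R) * f i * f (n + 1 - i) =
      2 * f 0 * f (n + 1) + ∑ i ∈ range n, ((n + 1).choose (i + 1) : R) * f (i + 1) * f (n - i) := by
  rw [sum_range_succ, sum_range_succ']
  simp only [Nat.choose_self, Nat.choose_zero_right, Nat.cast_one, Nat.sub_self, Nat.sub_zero,
    Nat.add_sub_add_right]
  ring

theorem sum_choose_mul_ascPochhammer_eval_neg_half {n : ℕ} (hn : 2 ≤ n) :
    ∑ i ∈ range (n + 1), (n.choose i : ℝ) * (ascPochhammer ℝ i).eval (-1/2) *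
      (ascPochhammer ℝ (n - i)).eval (-1/2) = 0 := by
  have h := ascPochhammer_eval_add (-1/2 : ℝ) (-1/2) n
  rw [show (-1/2 : ℝ) + -1/2 = -((1 : ℕ) : ℝ) by norm_num,
    ascPochhammer_eval_neg_coe_nat_of_lt (by omega), Nat.sum_antidiagonal_eq_sum_range_succ_mk] at h
  simp only [← mul_assoc] at h
  exact h.symm

theorem stmt2 (n : ℕ) (hn : 2 ≤ n) :
    ∑ i ∈ Finset.range (n + 1), (n.choose i : ℝ) * ff i * ff (n - i) = 4 * ff n := by
  obtain ⟨m, rfl⟩ : ∃ m, n = m + 1 := ⟨n - 1, by omega⟩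
  set g : ℕ → ℝ := fun i => (ascPochhammer ℝ i).eval (-1/2)
  have hvan : ∑ i ∈ range (m + 2), ((m + 1).choose i : ℝ) * g i * g (m + 1 - i) = 0 :=
    sum_choose_mul_ascPochhammer_eval_neg_half hn
  have hmid : ∑ i ∈ range m, ((m + 1).choose (i + 1) : ℝ) * ff (i + 1) * ff (m - i) =
      ∑ i ∈ range m, ((m + 1).choose (i + 1) : ℝ) * g (i + 1) * g (m - i) := by
    refine sum_congr rfl fun i hi => ?_
    obtain ⟨k, hk⟩ : ∃ k, m - i = k + 1 := ⟨m - i - 1, by have := mem_range.mp hi; omega⟩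
    simp only [g, hk, ascPochhammer_eval_neg_half_succ]
    ring
  have hg0 : g 0 = 1 := by simp [g]
  have hgm : g (m + 1) = -ff (m + 1) := ascPochhammer_eval_neg_half_succ m
  have hf0 : ff 0 = 1 := by simp [ff]
  rw [sum_range_choose_mul_mul_eq] at hvan ⊢
  rw [hg0, hgm, ← hmid] at hvan
  rw [hf0]
  linarith
end

section
/- Let f(y) = (1 − √(1−y))/2 and g = f². Then for every integer n ≥ 0 and every y ∈ [−3, 1), |g^{(n)}(y)| ≤ |f^{(n)}(y)|. -/
/-!
Since `f² = f - y/4` on `(-∞, 1)`, the derivatives of `g = f²` and `f` of order at least two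
coincide. For orders zero and one, `g = f · f` and `g' = 2 f f'`, and `|f| ≤ 1/2` on `[-3, 1)`
because `√(1 - y) ≤ 2` there.
-/

open Filter Topology

theorem abs_iteratedDeriv_sq_le {f : ℝ → ℝ} {x c : ℝ} {n : ℕ} (hf : ContDiffAt ℝ n f x)
    (hsq : (fun t => f t ^ 2) =ᶠ[𝓝 x] fun t => f t - c * t) (hfx : |f x| ≤ 1 / 2) :
    |iteratedDeriv n (fun t => f t ^ 2) x| ≤ |iteratedDeriv n f x| := by
  match n with
  | 0 =>
    simp only [iteratedDeriv_zero, abs_pow]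
    exact sq_le (abs_nonneg _) (by linarith)
  | 1 =>
    have hdiff : DifferentiableAt ℝ f x := hf.differentiableAt one_ne_zero
    have htwice : |((2 : ℕ) : ℝ) * f x ^ (2 - 1)| ≤ 1 := by
      rw [pow_one, abs_mul, Nat.cast_ofNat, abs_two]
      linarith
    rw [iteratedDeriv_one, iteratedDeriv_one, deriv_fun_pow hdiff, abs_mul]
    exact mul_le_of_le_one_left (abs_nonneg _) htwice
  | k + 2 =>
    have hlin : ContDiffAt ℝ (k + 2 : ℕ) (fun t => c * t) x := contDiffAt_id.const_smul c
    rw [hsq.iteratedDeriv_eq, iteratedDeriv_fun_sub hf hlin, iteratedDeriv_const_mul_field,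
      iteratedDeriv_fun_id]
    simp

theorem contDiffAt_one_sub_sqrt_one_sub_div_two {y : ℝ} (hy : y < 1) (n : WithTop ℕ∞) :
    ContDiffAt ℝ n (fun t : ℝ => (1 - √(1 - t)) / 2) y :=
  (contDiffAt_const.sub ((Real.contDiffAt_sqrt (sub_ne_zero.mpr hy.ne')).comp y
    (contDiffAt_const.sub contDiffAt_id))).div_const 2

theorem one_sub_sqrt_one_sub_div_two_sq {t : ℝ} (ht : t ≤ 1) :
    ((1 - √(1 - t)) / 2) ^ 2 = (1 - √(1 - t)) / 2 - 1 / 4 * t := by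
  nlinarith [Real.sq_sqrt (sub_nonneg.mpr ht)]

theorem abs_one_sub_sqrt_one_sub_div_two_le {y : ℝ} (hy : y ∈ Set.Icc (-3 : ℝ) 1) :
    |(1 - √(1 - y)) / 2| ≤ 1 / 2 := by
  have hsqrt : √(1 - y) ≤ 2 := (Real.sqrt_le_left zero_le_two).mpr (by linarith [hy.1])
  rw [abs_le]
  constructor <;> linarith [Real.sqrt_nonneg (1 - y)]

theorem stmt7 (n : ℕ) (y : ℝ) (hy : y ∈ Set.Ico (-3 : ℝ) 1) :
    |iteratedDeriv n (fun t : ℝ => ((1 - Real.sqrt (1 - t)) / 2) ^ 2) y|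
      ≤ |iteratedDeriv n (fun t : ℝ => (1 - Real.sqrt (1 - t)) / 2) y| := by
  have hsq : (fun t : ℝ => ((1 - √(1 - t)) / 2) ^ 2) =ᶠ[𝓝 y]
      fun t => (1 - √(1 - t)) / 2 - 1 / 4 * t := by
    filter_upwards [Iio_mem_nhds hy.2] with t ht
    exact one_sub_sqrt_one_sub_div_two_sq ht.le
  exact abs_iteratedDeriv_sq_le (contDiffAt_one_sub_sqrt_one_sub_div_two hy.2 n) hsq
    (abs_one_sub_sqrt_one_sub_div_two_le (Set.Ico_subset_Icc_self hy))
end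

section
/- Let 0 < p ≤ 1 and let β = (β_j)_{j≥1} be a sequence of nonnegative reals with ∑_j β_j^p =: B^p < ∞. Assume additionally that β is nonincreasing. Then for every integer s ≥ 1, the tail sum satisfies ∑_{j ≥ s+1} β_j ≤ min(p/(1−p), 1) · B · s^{−(1/p − 1)} (when p < 1; for p = 1 the bound reads ∑_{j≥s+1} β_j ≤ B). -/
/-! Monotonicity gives `(k + 1) β_k^p ≤ B^p`, i.e. `β_k ≤ B (k + 1)^(-1/p)`. Writing
`β_j = β_j^(1-p) β_j^p ≤ β_s^(1-p) β_j^p` on the tail then yields the bound with constant `1`,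
while summing the pointwise bound and comparing with `∫_s^∞ x^(-1/p) dx` yields `p / (1 - p)`. -/

open Real Finset

theorem Antitone.succ_mul_le_tsum {f : ℕ → ℝ} (hf : Antitone f) (h0 : ∀ j, 0 ≤ f j)
    (hs : Summable f) (k : ℕ) : ((k : ℝ) + 1) * f k ≤ ∑' j, f j := by
  calc ((k : ℝ) + 1) * f k = ∑ _j ∈ range (k + 1), f k := by simp
    _ ≤ ∑ j ∈ range (k + 1), f j :=
      sum_le_sum fun j hj => hf (Nat.lt_succ_iff.mp (mem_range.mp hj))
    _ ≤ ∑' j, f j := hs.sum_le_tsum _ fun j _ => h0 j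

theorem tsum_natCast_add_rpow_le {a : ℝ} (ha : a < -1) {N : ℕ} (hN : 0 < N) :
    ∑' n : ℕ, ((n + N + 1 : ℕ) : ℝ) ^ a ≤ -(N : ℝ) ^ (a + 1) / (a + 1) := by
  have hN' : (0 : ℝ) < N := by exact_mod_cast hN
  rw [← integral_Ioi_rpow_of_lt ha hN']
  refine AntitoneOn.tsum_comp_add_le_integral N ?_ (integrableOn_Ioi_rpow_of_lt ha hN')
    fun t ht => rpow_nonneg (hN'.trans ht).le a
  intro x hx y _ hxy
  exact rpow_le_rpow_of_nonpos (hN'.trans_le hx) hxy (by linarith)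

section

variable {p : ℝ} {β : ℕ → ℝ}

theorem Antitone.apply_le_tsum_rpow_rpow_mul (hp : 0 < p) (hβ : ∀ j, 0 ≤ β j) (hmono : Antitone β)
    (hsum : Summable fun j => β j ^ p) (k : ℕ) :
    β k ≤ (∑' j, β j ^ p) ^ (1 / p) * ((k : ℝ) + 1) ^ (-(1 / p)) := by
  have hk : (0 : ℝ) < k + 1 := by positivity
  have hmono_rpow : Antitone fun j => β j ^ p := fun i j hij => rpow_le_rpow (hβ j) (hmono hij) hp.le
  have hle : β k ^ p ≤ (∑' j, β j ^ p) * ((k : ℝ) + 1)⁻¹ := by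
    rw [← div_eq_mul_inv, le_div_iff₀ hk, mul_comm]
    exact hmono_rpow.succ_mul_le_tsum (fun j => rpow_nonneg (hβ j) p) hsum k
  calc β k = (β k ^ p) ^ (1 / p) := by rw [← rpow_mul (hβ k), mul_one_div_cancel hp.ne', rpow_one]
    _ ≤ ((∑' j, β j ^ p) * ((k : ℝ) + 1)⁻¹) ^ (1 / p) :=
      rpow_le_rpow (rpow_nonneg (hβ k) p) hle (by positivity)
    _ = _ := by
      rw [mul_rpow (tsum_nonneg fun j => rpow_nonneg (hβ j) p) (by positivity), inv_rpow hk.le,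
        ← rpow_neg hk.le]

theorem Antitone.tsum_comp_add_le_rpow_mul_tsum_rpow (hp : p ≤ 1) (hβ : ∀ j, 0 ≤ β j)
    (hmono : Antitone β) (hsum : Summable fun j => β j ^ p) (s : ℕ) :
    ∑' j, β (s + j) ≤ β s ^ (1 - p) * ∑' j, β j ^ p := by
  have hinj : Function.Injective (s + ·) := add_right_injective s
  have hsum_tail : Summable fun j => β (s + j) ^ p := hsum.comp_injective hinj
  have hle : ∀ j, β (s + j) ≤ β s ^ (1 - p) * β (s + j) ^ p := fun j => by
    calc β (s + j) = β (s + j) ^ (1 - p) * β (s + j) ^ p := by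
          rw [← rpow_add' (hβ _) (by simp), sub_add_cancel, rpow_one]
      _ ≤ _ := mul_le_mul_of_nonneg_right
          (rpow_le_rpow (hβ _) (hmono (Nat.le_add_right s j)) (by linarith)) (rpow_nonneg (hβ _) p)
  calc ∑' j, β (s + j) ≤ ∑' j, β s ^ (1 - p) * β (s + j) ^ p :=
        Summable.tsum_le_tsum hle (.of_nonneg_of_le (fun j => hβ _) hle (hsum_tail.mul_left _))
          (hsum_tail.mul_left _)
    _ = β s ^ (1 - p) * ∑' j, β (s + j) ^ p := tsum_mul_left
    _ ≤ β s ^ (1 - p) * ∑' j, β j ^ p := mul_le_mul_of_nonneg_left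
      (hsum_tail.tsum_le_tsum_of_inj _ hinj (fun j _ => rpow_nonneg (hβ j) p) (fun j => le_rfl) hsum)
      (rpow_nonneg (hβ s) _)

theorem Antitone.tsum_comp_add_le_tsum_rpow_rpow_mul (hp0 : 0 < p) (hp1 : p ≤ 1)
    (hβ : ∀ j, 0 ≤ β j) (hmono : Antitone β) (hsum : Summable fun j => β j ^ p) (s : ℕ) :
    ∑' j, β (s + j) ≤ (∑' j, β j ^ p) ^ (1 / p) * ((s : ℝ) + 1) ^ (-(1 / p - 1)) := by
  set B := (∑' j, β j ^ p) ^ (1 / p)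
  have hT : 0 ≤ ∑' j, β j ^ p := tsum_nonneg fun j => rpow_nonneg (hβ j) p
  have hB : 0 ≤ B := rpow_nonneg hT _
  have hBp : B ^ p = ∑' j, β j ^ p := by
    rw [← rpow_mul hT, one_div_mul_cancel hp0.ne', rpow_one]
  have hs : (0 : ℝ) ≤ s + 1 := by positivity
  calc ∑' j, β (s + j) ≤ β s ^ (1 - p) * ∑' j, β j ^ p :=
        hmono.tsum_comp_add_le_rpow_mul_tsum_rpow hp1 hβ hsum s
    _ ≤ (B * ((s : ℝ) + 1) ^ (-(1 / p))) ^ (1 - p) * B ^ p := by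
      rw [hBp]
      exact mul_le_mul_of_nonneg_right (rpow_le_rpow (hβ s)
        (hmono.apply_le_tsum_rpow_rpow_mul hp0 hβ hsum s) (by linarith)) hT
    _ = B * ((s : ℝ) + 1) ^ (-(1 / p - 1)) := by
      rw [mul_rpow hB (rpow_nonneg hs _), ← rpow_mul hs, mul_right_comm,
        ← rpow_add' hB (by simp), sub_add_cancel, rpow_one]
      congr 2
      field_simp

theorem Antitone.tsum_comp_add_le_div_one_sub_mul (hp0 : 0 < p) (hp1 : p < 1)
    (hβ : ∀ j, 0 ≤ β j) (hmono : Antitone β) (hsum : Summable fun j => β j ^ p) {s : ℕ}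
    (hs : 0 < s) :
    ∑' j, β (s + j) ≤ p / (1 - p) * (∑' j, β j ^ p) ^ (1 / p) * (s : ℝ) ^ (-(1 / p - 1)) := by
  set B := (∑' j, β j ^ p) ^ (1 / p)
  have ha : -(1 / p) < -1 := by
    rw [neg_lt_neg_iff, lt_div_iff₀ hp0]; linarith
  have hg : Summable fun j : ℕ => ((j + s + 1 : ℕ) : ℝ) ^ (-(1 / p)) :=
    (summable_nat_add_iff (s + 1)).mpr (summable_nat_rpow.mpr ha) |>.congr fun j => by
      simp [add_assoc]
  have hle : ∀ j, β (s + j) ≤ B * ((j + s + 1 : ℕ) : ℝ) ^ (-(1 / p)) := fun j => by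
    convert hmono.apply_le_tsum_rpow_rpow_mul hp0 hβ hsum (s + j) using 3
    push_cast; ring
  calc ∑' j, β (s + j) ≤ ∑' j : ℕ, B * ((j + s + 1 : ℕ) : ℝ) ^ (-(1 / p)) :=
        Summable.tsum_le_tsum hle (.of_nonneg_of_le (fun j => hβ _) hle (hg.mul_left B))
          (hg.mul_left B)
    _ = B * ∑' j : ℕ, ((j + s + 1 : ℕ) : ℝ) ^ (-(1 / p)) := tsum_mul_left
    _ ≤ B * (-(s : ℝ) ^ (-(1 / p) + 1) / (-(1 / p) + 1)) :=
      mul_le_mul_of_nonneg_left (tsum_natCast_add_rpow_le ha hs)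
        (rpow_nonneg (tsum_nonneg fun j => rpow_nonneg (hβ j) p) _)
    _ = p / (1 - p) * B * (s : ℝ) ^ (-(1 / p - 1)) := by
      rw [show -(1 / p) + 1 = -(1 / p - 1) by ring]
      have : 1 - p ≠ 0 := by linarith
      field_simp

end

-- `β j` stands for the paper's `β_{j+1}`.
/-- Tail-sum bound for nonincreasing `ℓ^p` sequences (`β j` stands for `β_{j+1}`). -/
theorem stmt15 (p : ℝ) (hp0 : 0 < p) (hp1 : p ≤ 1)
    (β : ℕ → ℝ) (hβ : ∀ j, 0 ≤ β j) (hmono : Antitone β)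
    (hsum : Summable fun j => β j ^ p)
    (B : ℝ) (hB : B = (∑' j : ℕ, β j ^ p) ^ (1 / p)) :
    ∀ s : ℕ, 1 ≤ s →
      ((p < 1 →
        ∑' j : ℕ, β (s + j) ≤ min (p / (1 - p)) 1 * B * (s : ℝ) ^ (-(1 / p - 1))) ∧
       (p = 1 → ∑' j : ℕ, β (s + j) ≤ B)) := by
  intro s hs
  have hs0 : (0 : ℝ) < s := by exact_mod_cast hs
  have hcrude : ∑' j, β (s + j) ≤ B * (s : ℝ) ^ (-(1 / p - 1)) := by
    refine (hB ▸ hmono.tsum_comp_add_le_tsum_rpow_rpow_mul hp0 hp1 hβ hsum s).trans ?_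
    refine mul_le_mul_of_nonneg_left (rpow_le_rpow_of_nonpos hs0 (by linarith) ?_) ?_
    · rw [neg_nonpos, sub_nonneg, le_div_iff₀ hp0, one_mul]
      exact hp1
    · exact hB ▸ rpow_nonneg (tsum_nonneg fun j => rpow_nonneg (hβ j) p) _
  refine ⟨fun hp => ?_, fun hp => by simpa [hp] using hcrude⟩
  rcases le_total (p / (1 - p)) 1 with h | h
  · rw [min_eq_left h, hB]
    exact hmono.tsum_comp_add_le_div_one_sub_mul hp0 hp hβ hsum hs
  · rwa [min_eq_right h, one_mul]
end

section
/- Let α = (α_j)_{j≥1} be nonnegative reals with ∑_{j≥1} α_j < 1. Then ∑_{u finite ⊂ ℕ} |u|! · ∏_{j∈u} α_j ≤ 1/(1 − ∑_{j≥1} α_j), where the sum is over all finite subsets u of ℕ (including the empty set, contributing 1). -/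
/-!
Group the subsets by cardinality. Sending a `k`-subset `u ⊆ s` to its indicator vector picks out
some of the terms of the multinomial expansion of `(∑ j ∈ s, α j) ^ k`, each with coefficient `k!`,
so `k! · ∑_{|u| = k} ∏ j ∈ u, α j ≤ (∑ j ∈ s, α j) ^ k ≤ (∑' j, α j) ^ k`. Summing over `k` bounds
every finite partial sum by the geometric series `∑ k, (∑' j, α j) ^ k = 1 / (1 - ∑' j, α j)`.
-/

open Finset Nat

variable {ι R : Type*} [DecidableEq ι] [CommSemiring R] [PartialOrder R] [IsOrderedRing R]

lemma indicator_mem_piAntidiag {s u : Finset ι} {n : ℕ} (hu : u ∈ s.powersetCard n) :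
    (fun i => if i ∈ u then 1 else 0 : ι → ℕ) ∈ s.piAntidiag n := by
  obtain ⟨hus, rfl⟩ := mem_powersetCard.mp hu
  simp only [mem_piAntidiag, sum_boole, ne_eq, ite_eq_right_iff, one_ne_zero, imp_false, not_not]
  exact ⟨by rw [filter_mem_eq_inter, inter_eq_right.mpr hus]; simp, fun i hi => hus hi⟩

lemma multinomial_indicator (s u : Finset ι) (h : u ⊆ s) :
    multinomial s (fun i => if i ∈ u then 1 else 0) = u.card ! := by
  have := multinomial_spec s (fun i => if i ∈ u then 1 else 0)
  simp only [apply_ite factorial, factorial_zero, factorial_one, ite_self, prod_const_one, one_mul,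
    sum_boole] at this
  rw [this, Nat.cast_id, filter_mem_eq_inter, inter_eq_right.mpr h]

theorem factorial_mul_sum_powersetCard_prod_le_sum_pow (s : Finset ι) (f : ι → R)
    (hf : ∀ i ∈ s, 0 ≤ f i) (n : ℕ) :
    (n ! : R) * ∑ u ∈ s.powersetCard n, ∏ i ∈ u, f i ≤ (∑ i ∈ s, f i) ^ n := by
  classical
  set ind : Finset ι → ι → ℕ := fun u i => if i ∈ u then 1 else 0
  have hind : Set.InjOn ind (s.powersetCard n) := by
    intro u _ v _ h
    ext i
    have := congrFun h i
    by_cases hu : i ∈ u <;> by_cases hv : i ∈ v <;> simp_all [ind]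
  calc (n ! : R) * ∑ u ∈ s.powersetCard n, ∏ i ∈ u, f i
      = ∑ u ∈ s.powersetCard n, (multinomial s (ind u) : R) * ∏ i ∈ s, f i ^ ind u i := by
        rw [mul_sum]
        refine sum_congr rfl fun u hu => ?_
        obtain ⟨hus, rfl⟩ := mem_powersetCard.mp hu
        simp only [ind, multinomial_indicator s u hus, pow_ite, pow_one, pow_zero, prod_ite_mem,
          inter_eq_right.mpr hus]
    _ = ∑ k ∈ (s.powersetCard n).image ind, (multinomial s k : R) * ∏ i ∈ s, f i ^ k i := by
        rw [sum_image hind]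
    _ ≤ ∑ k ∈ s.piAntidiag n, (multinomial s k : R) * ∏ i ∈ s, f i ^ k i := by
        refine sum_le_sum_of_subset_of_nonneg ?_ fun k _ _ => ?_
        · exact image_subset_iff.mpr fun u hu => indicator_mem_piAntidiag hu
        · exact mul_nonneg (Nat.cast_nonneg _) (prod_nonneg fun i hi => pow_nonneg (hf i hi) _)
    _ = (∑ i ∈ s, f i) ^ n := (sum_pow_eq_sum_piAntidiag s f n).symm

theorem sum_powerset_factorial_card_mul_prod_le (s : Finset ι) (f : ι → R)
    (hf : ∀ i ∈ s, 0 ≤ f i) :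
    ∑ u ∈ s.powerset, (u.card ! : R) * ∏ i ∈ u, f i
      ≤ ∑ k ∈ range (s.card + 1), (∑ i ∈ s, f i) ^ k := by
  rw [sum_powerset]
  refine sum_le_sum fun k _ => ?_
  calc ∑ u ∈ s.powersetCard k, (u.card ! : R) * ∏ i ∈ u, f i
      = (k ! : R) * ∑ u ∈ s.powersetCard k, ∏ i ∈ u, f i := by
        rw [mul_sum]
        exact sum_congr rfl fun u hu => by rw [(mem_powersetCard.mp hu).2]
    _ ≤ (∑ i ∈ s, f i) ^ k := factorial_mul_sum_powersetCard_prod_le_sum_pow s f hf k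

theorem stmt16 (α : ℕ → ℝ) (hα : ∀ j, 0 ≤ α j) (hsum : Summable α)
    (h1 : ∑' j, α j < 1) :
    ∑' u : Finset ℕ, ((u.card).factorial : ℝ) * ∏ j ∈ u, α j
      ≤ 1 / (1 - ∑' j, α j) := by
  have hS : 0 ≤ ∑' j, α j := tsum_nonneg hα
  have hterm (u : Finset ℕ) : 0 ≤ (u.card ! : ℝ) * ∏ j ∈ u, α j :=
    mul_nonneg (by positivity) (prod_nonneg fun j _ => hα j)
  refine Real.tsum_le_of_sum_le hterm fun F => ?_
  set s := F.sup id
  calc ∑ u ∈ F, (u.card ! : ℝ) * ∏ j ∈ u, α j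
      ≤ ∑ u ∈ s.powerset, (u.card ! : ℝ) * ∏ j ∈ u, α j :=
        sum_le_sum_of_subset_of_nonneg (fun u hu => mem_powerset.mpr (le_sup (f := id) hu))
          fun u _ _ => hterm u
    _ ≤ ∑ k ∈ range (s.card + 1), (∑ j ∈ s, α j) ^ k :=
        sum_powerset_factorial_card_mul_prod_le s α fun j _ => hα j
    _ ≤ ∑ k ∈ range (s.card + 1), (∑' j, α j) ^ k :=
        sum_le_sum fun k _ => pow_le_pow_left₀ (sum_nonneg fun j _ => hα j)
          (hsum.sum_le_tsum s fun j _ => hα j) k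
    _ ≤ 1 / (1 - ∑' j, α j) := by
        rw [range_eq_Ico, ← pow_zero (∑' j, α j)]
        exact geom_sum_Ico_le_of_lt_one hS h1
end

section
/- Suppose for countably many parameters y with ‖y − y₀‖_∞ < r, a function f satisfies |∂^ν f(y₀)| ≤ C |ν|! / R^ν for all finitely supported multiindices ν, where R = (R_1, R_2, …) satisfies r ∑_{i=1}^∞ R_i^{−1} < 1. Then the formal Taylor series of f at y₀ is absolutely bounded: ∑_{ν ∈ 𝓕} (|∂^ν f(y₀)| / ν!) |y−y₀|^ν ≤ C / (1 − r ∑_{i=1}^∞ R_i^{−1}), using the identity (1 − ∑_i z_i)^{−1} = ∑_{ν∈𝓕} (|ν|!/ν!) z^ν for nonnegative z with ∑_i z_i < 1. -/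
open Finset

-- transfer sums over finsuppAntidiag to piAntidiag
lemma sum_finsuppAntidiag_eq {s : Finset ℕ} {n : ℕ} (H : (ℕ → ℕ) → ℝ) :
    ∑ ν ∈ finsuppAntidiag s n, H ⇑ν = ∑ k ∈ piAntidiag s n, H k := by
  rw [finsuppAntidiag, sum_map]
  exact sum_attach _ _

lemma multinomial_finsupp (z : ℕ → ℝ) (s : Finset ℕ) (n : ℕ) :
    ∑ ν ∈ finsuppAntidiag s n,
      (((ν.sum fun _ n => n).factorial : ℝ) / (ν.prod fun _ n => (n.factorial : ℝ)))
        * (ν.prod fun i n => z i ^ n)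
    = (∑ i ∈ s, z i) ^ n := by
  rw [Finset.sum_pow_eq_sum_piAntidiag,
    ← sum_finsuppAntidiag_eq (fun k => (Nat.multinomial s k : ℝ) * ∏ i ∈ s, z i ^ k i)]
  refine sum_congr rfl fun ν hν => ?_
  obtain ⟨hsum, hsupp⟩ := mem_finsuppAntidiag.1 hν
  have h1 : ν.sum (fun _ n => n) = ∑ i ∈ s, ν i :=
    Finsupp.sum_of_support_subset ν hsupp _ (fun _ _ => rfl)
  have h2 : (ν.prod fun _ n => (n.factorial : ℝ)) = ∏ i ∈ s, ((ν i).factorial : ℝ) :=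
    Finsupp.prod_of_support_subset ν hsupp _ (fun _ _ => by simp)
  have h3 : (ν.prod fun i n => z i ^ n) = ∏ i ∈ s, z i ^ ν i :=
    Finsupp.prod_of_support_subset ν hsupp _ (fun _ _ => pow_zero _)
  have hfacpos : (0:ℝ) < ∏ i ∈ s, ((ν i).factorial : ℝ) :=
    prod_pos fun i _ => by exact_mod_cast (ν i).factorial_pos
  have hmul : (Nat.multinomial s ⇑ν : ℝ) =
      ((∑ i ∈ s, ν i).factorial : ℝ) / ∏ i ∈ s, ((ν i).factorial : ℝ) := by
    rw [eq_div_iff hfacpos.ne', mul_comm]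
    exact_mod_cast congrArg Nat.cast (Nat.multinomial_spec s ⇑ν)
  rw [h1, h2, h3, hmul]

lemma nonneg_term (z : ℕ → ℝ) (hz : ∀ i, 0 ≤ z i) (ν : ℕ →₀ ℕ) :
    0 ≤ (((ν.sum fun _ n => n).factorial : ℝ) / (ν.prod fun _ n => (n.factorial : ℝ)))
        * (ν.prod fun i n => z i ^ n) := by
  apply mul_nonneg
  · apply div_nonneg (by positivity)
    rw [Finsupp.prod]
    exact Finset.prod_nonneg (fun i _ => by positivity)
  · rw [Finsupp.prod]
    exact Finset.prod_nonneg (fun i _ => pow_nonneg (hz i) _)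

lemma key (z : ℕ → ℝ) (hz : ∀ i, 0 ≤ z i) (hzs : Summable z) (h1 : ∑' i, z i < 1) :
    Summable (fun ν : ℕ →₀ ℕ =>
      (((ν.sum fun _ n => n).factorial : ℝ) / (ν.prod fun _ n => (n.factorial : ℝ)))
        * (ν.prod fun i n => z i ^ n)) ∧
    (∑' ν : ℕ →₀ ℕ,
      (((ν.sum fun _ n => n).factorial : ℝ) / (ν.prod fun _ n => (n.factorial : ℝ)))
        * (ν.prod fun i n => z i ^ n)) = (1 - ∑' i, z i)⁻¹ := by
  set g : (ℕ →₀ ℕ) → ℝ := fun ν =>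
      (((ν.sum fun _ n => n).factorial : ℝ) / (ν.prod fun _ n => (n.factorial : ℝ)))
        * (ν.prod fun i n => z i ^ n) with hg
  have hg0 : ∀ ν, 0 ≤ g ν := nonneg_term z hz
  set S := ∑' i, z i with hS
  have hS0 : 0 ≤ S := tsum_nonneg hz
  have hsumT : ∀ (s : Finset ℕ) (N : ℕ),
      ∑ ν ∈ (range N).biUnion (fun n => finsuppAntidiag s n), g ν
        = ∑ n ∈ range N, (∑ i ∈ s, z i) ^ n := by
    intro s N
    rw [sum_biUnion]
    · exact sum_congr rfl fun n _ => multinomial_finsupp z s n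
    · intro a _ b _ hab
      simp only [Finset.disjoint_left]
      intro ν hνa hνb
      exact hab ((mem_finsuppAntidiag.1 hνa).1.symm.trans (mem_finsuppAntidiag.1 hνb).1)
  have hbound : ∀ u : Finset (ℕ →₀ ℕ), ∑ ν ∈ u, g ν ≤ (1 - S)⁻¹ := by
    intro u
    set s : Finset ℕ := u.biUnion Finsupp.support with hs
    set N : ℕ := (u.sup fun ν => ν.sum fun _ n => n) + 1 with hN
    have hsub : u ⊆ (range N).biUnion (fun n => finsuppAntidiag s n) := by
      intro ν hν
      refine mem_biUnion.2 ⟨ν.sum fun _ n => n, ?_, ?_⟩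
      · exact mem_range.2 (Nat.lt_succ_of_le (Finset.le_sup (f := fun ν => ν.sum fun _ n => n) hν))
      · refine mem_finsuppAntidiag.2 ⟨?_, fun i hi => mem_biUnion.2 ⟨ν, hν, hi⟩⟩
        exact (Finsupp.sum_of_support_subset ν
          (fun i hi => mem_biUnion.2 ⟨ν, hν, hi⟩) (fun _ n => n) (fun _ _ => rfl)).symm
    calc ∑ ν ∈ u, g ν ≤ ∑ ν ∈ (range N).biUnion (fun n => finsuppAntidiag s n), g ν :=
          sum_le_sum_of_subset_of_nonneg hsub (fun ν _ _ => hg0 ν)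
      _ = ∑ n ∈ range N, (∑ i ∈ s, z i) ^ n := hsumT s N
      _ ≤ ∑ n ∈ range N, S ^ n := by
          refine sum_le_sum fun n _ => pow_le_pow_left₀ ?_ ?_ n
          · exact sum_nonneg fun i _ => hz i
          · exact Summable.sum_le_tsum s (fun i _ => hz i) hzs
      _ ≤ ∑' n, S ^ n :=
          Summable.sum_le_tsum _ (fun n _ => pow_nonneg hS0 n) (summable_geometric_of_lt_one hS0 h1)
      _ = (1 - S)⁻¹ := tsum_geometric_of_lt_one hS0 h1
  have hsummable : Summable g := summable_of_sum_le (fun ν => hg0 ν) hbound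
  have hub : ∑' ν, g ν ≤ (1 - S)⁻¹ := Summable.tsum_le_of_sum_le hsummable hbound
  have hlb : (1 - S)⁻¹ ≤ ∑' ν, g ν := by
    have hstep : ∀ s : Finset ℕ, (1 - ∑ i ∈ s, z i)⁻¹ ≤ ∑' ν, g ν := by
      intro s
      have ht0 : (0:ℝ) ≤ ∑ i ∈ s, z i := sum_nonneg fun i _ => hz i
      have ht1 : (∑ i ∈ s, z i) < 1 := lt_of_le_of_lt (Summable.sum_le_tsum s (fun i _ => hz i) hzs) h1
      rw [← tsum_geometric_of_lt_one ht0 ht1]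
      refine Real.tsum_le_of_sum_range_le (fun n => pow_nonneg ht0 n) fun N => ?_
      rw [← hsumT s N]
      exact Summable.sum_le_tsum _ (fun ν _ => hg0 ν) hsummable
    have htend : Filter.Tendsto (fun s : Finset ℕ => (1 - ∑ i ∈ s, z i)⁻¹)
        Filter.atTop (nhds (1 - S)⁻¹) := by
      have h2 : Filter.Tendsto (fun s : Finset ℕ => ∑ i ∈ s, z i) Filter.atTop (nhds S) :=
        hzs.hasSum
      exact ((tendsto_const_nhds.sub h2).inv₀ (by linarith)).congr (fun s => rfl)
    exact le_of_tendsto htend (Filter.Eventually.of_forall hstep)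
  exact ⟨hsummable, le_antisymm hub hlb⟩

theorem stmt18 (C r : ℝ) (hC : 0 < C) (hr : 0 < r)
    (R : ℕ → ℝ) (hR : ∀ i, 0 < R i) (hRsum : Summable fun i => (R i)⁻¹)
    (hsmall : r * ∑' i, (R i)⁻¹ < 1)
    (y y₀ : ℕ → ℝ) (hy : ∀ i, |y i - y₀ i| < r)
    (D : (ℕ →₀ ℕ) → ℝ)
    (hD : ∀ ν : ℕ →₀ ℕ,
      |D ν| ≤ C * (((ν.sum fun _ n => n).factorial : ℝ)) / (ν.prod fun i n => R i ^ n)) :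
    (∑' ν : ℕ →₀ ℕ,
        |D ν| / (ν.prod fun _ n => (n.factorial : ℝ)) * (ν.prod fun i n => |y i - y₀ i| ^ n)
      ≤ C / (1 - r * ∑' i, (R i)⁻¹)) ∧
    (∀ z : ℕ → ℝ, (∀ i, 0 ≤ z i) → Summable z → (∑' i, z i) < 1 →
      ∑' ν : ℕ →₀ ℕ,
          (((ν.sum fun _ n => n).factorial : ℝ) / (ν.prod fun _ n => (n.factorial : ℝ)))
            * (ν.prod fun i n => z i ^ n)
        = (1 - ∑' i, z i)⁻¹) := by
  have hC0 : (0:ℝ) ≤ C := hC.le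
  set w : ℕ → ℝ := fun i => |y i - y₀ i| / R i with hw
  have hw0 : ∀ i, 0 ≤ w i := fun i => div_nonneg (abs_nonneg _) (hR i).le
  have hwle : ∀ i, w i ≤ r * (R i)⁻¹ := fun i => by
    simp only [hw, div_eq_mul_inv]
    exact mul_le_mul_of_nonneg_right (hy i).le (inv_nonneg.2 (hR i).le)
  have hws : Summable w := Summable.of_nonneg_of_le hw0 hwle (hRsum.mul_left r)
  have hwsum : ∑' i, w i ≤ r * ∑' i, (R i)⁻¹ := by
    rw [← tsum_mul_left]
    exact Summable.tsum_le_tsum hwle hws (hRsum.mul_left r)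
  have h1w : ∑' i, w i < 1 := lt_of_le_of_lt hwsum hsmall
  obtain ⟨hsumw, htsumw⟩ := key w hw0 hws h1w
  set gw : (ℕ →₀ ℕ) → ℝ := fun ν =>
      (((ν.sum fun _ n => n).factorial : ℝ) / (ν.prod fun _ n => (n.factorial : ℝ)))
        * (ν.prod fun i n => w i ^ n) with hgw
  set g' : (ℕ →₀ ℕ) → ℝ := fun ν =>
      |D ν| / (ν.prod fun _ n => (n.factorial : ℝ)) * (ν.prod fun i n => |y i - y₀ i| ^ n)
    with hg'
  have hFpos : ∀ ν : ℕ →₀ ℕ, (0:ℝ) < ν.prod fun _ n => (n.factorial : ℝ) := fun ν => by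
    rw [Finsupp.prod]
    exact Finset.prod_pos fun i _ => by exact_mod_cast (ν i).factorial_pos
  have hPpos : ∀ ν : ℕ →₀ ℕ, (0:ℝ) < ν.prod fun i n => R i ^ n := fun ν => by
    rw [Finsupp.prod]
    exact Finset.prod_pos fun i _ => pow_pos (hR i) _
  have hA0 : ∀ ν : ℕ →₀ ℕ, (0:ℝ) ≤ ν.prod fun i n => |y i - y₀ i| ^ n := fun ν => by
    rw [Finsupp.prod]
    exact Finset.prod_nonneg fun i _ => pow_nonneg (abs_nonneg _) _
  have hprodw : ∀ ν : ℕ →₀ ℕ, (ν.prod fun i n => w i ^ n)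
      = (ν.prod fun i n => |y i - y₀ i| ^ n) / (ν.prod fun i n => R i ^ n) := fun ν => by
    simp only [Finsupp.prod, hw, div_pow, Finset.prod_div_distrib]
  have hg'0 : ∀ ν, 0 ≤ g' ν := fun ν =>
    mul_nonneg (div_nonneg (abs_nonneg _) (hFpos ν).le) (hA0 ν)
  have hle : ∀ ν, g' ν ≤ C * gw ν := by
    intro ν
    have h2 : |D ν| / (ν.prod fun _ n => (n.factorial : ℝ))
        ≤ (C * (((ν.sum fun _ n => n).factorial : ℝ)) / (ν.prod fun i n => R i ^ n))
          / (ν.prod fun _ n => (n.factorial : ℝ)) :=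
      div_le_div_of_nonneg_right (hD ν) (hFpos ν).le
    calc g' ν ≤ (C * (((ν.sum fun _ n => n).factorial : ℝ)) / (ν.prod fun i n => R i ^ n))
          / (ν.prod fun _ n => (n.factorial : ℝ)) * (ν.prod fun i n => |y i - y₀ i| ^ n) :=
        mul_le_mul_of_nonneg_right h2 (hA0 ν)
      _ = C * gw ν := by
        simp only [hgw, hprodw ν]
        field_simp
  have hsum' : Summable g' :=
    Summable.of_nonneg_of_le hg'0 hle (hsumw.mul_left C)
  have step : ∑' ν, g' ν ≤ C * (1 - ∑' i, w i)⁻¹ := by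
    calc ∑' ν, g' ν ≤ ∑' ν, C * gw ν := Summable.tsum_le_tsum hle hsum' (hsumw.mul_left C)
      _ = C * ∑' ν, gw ν := tsum_mul_left
      _ = C * (1 - ∑' i, w i)⁻¹ := by rw [htsumw]
  have hden : (0:ℝ) < 1 - r * ∑' i, (R i)⁻¹ := by linarith
  have hinv : (1 - ∑' i, w i)⁻¹ ≤ (1 - r * ∑' i, (R i)⁻¹)⁻¹ := by
    apply inv_anti₀ hden
    linarith
  refine ⟨?_, fun z hz hzs h1 => (key z hz hzs h1).2⟩
  calc ∑' ν, g' ν ≤ C * (1 - ∑' i, w i)⁻¹ := step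
    _ ≤ C * (1 - r * ∑' i, (R i)⁻¹)⁻¹ := mul_le_mul_of_nonneg_left hinv hC0
    _ = C / (1 - r * ∑' i, (R i)⁻¹) := (div_eq_mul_inv _ _).symm
end
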